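/- Let α, λ0, λ1 be nonzero real numbers, let λ3 ∈ ℝ be arbitrary, and set λ2 = −(α²λ0² + λ1²)/(2λ0). Define K = λ0 H − λ1 V1 − λ2 V2 − λ3 V3 on ℝ⁶, where H = ½(s1²+s2²+2s3²) + α r1 s3 − ½α² r3², V1 = s1r1+s2r2+s3r3, V2 = r1²+r2²+r3², V3 = ½[(α r1 s1 + α r2 s2 + s1 s3)² + s3²(s2² + (α r1 + s3)²)]. Then for every c ∈ ℝ, the gradient of K vanishes at the point (s1, s2, s3, r1, r2, r3) = (−λ1 c/(α λ0), 0, c, −c/α, 0, λ0 c/λ1); i.e., this one-parameter family of points consists of critical points of K (stationary solutions obtained by the Routh–Lyapunov method). -/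

import Mathlib

noncomputable section

/-- K = λ0 H − λ1 V1 − λ2 V2 − λ3 V3 on ℝ⁶ with coordinates (s1,s2,s3,r1,r2,r3),
where H = ½(s1²+s2²+2s3²) + α r1 s3 − ½α² r3², V1 = s1r1+s2r2+s3r3,
V2 = r1²+r2²+r3², V3 = ½[(α r1 s1 + α r2 s2 + s1 s3)² + s3²(s2² + (α r1 + s3)²)]. -/
def Ksok (α lam0 lam1 lam2 lam3 : ℝ) : ℝ × ℝ × ℝ × ℝ × ℝ × ℝ → ℝ :=
  fun (s1, s2, s3, r1, r2, r3) =>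
    lam0 * ((1 / 2) * (s1 ^ 2 + s2 ^ 2 + 2 * s3 ^ 2) + α * r1 * s3
        - (1 / 2) * α ^ 2 * r3 ^ 2)
      - lam1 * (s1 * r1 + s2 * r2 + s3 * r3)
      - lam2 * (r1 ^ 2 + r2 ^ 2 + r3 ^ 2)
      - lam3 * ((1 / 2) * ((α * r1 * s1 + α * r2 * s2 + s1 * s3) ^ 2
        + s3 ^ 2 * (s2 ^ 2 + (α * r1 + s3) ^ 2)))

private lemma mul_vanish_hasFDerivAt {E : Type*} [NormedAddCommGroup E]
    [NormedSpace ℝ E] {f g : E → ℝ} {p : E}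
    (hf : DifferentiableAt ℝ f p) (hg : DifferentiableAt ℝ g p)
    (hf0 : f p = 0) (hg0 : g p = 0) :
    HasFDerivAt (fun x => f x * g x) (0 : E →L[ℝ] ℝ) p := by
  have h := hf.hasFDerivAt.mul hg.hasFDerivAt
  simp only [hf0, hg0, zero_smul, add_zero] at h
  exact h

set_option maxHeartbeats 2000000 in
/-- For nonzero α, λ0, λ1, arbitrary λ3, and λ2 = −(α²λ0² + λ1²)/(2λ0), the gradient
of K vanishes at every point (−λ1 c/(α λ0), 0, c, −c/α, 0, λ0 c/λ1), c ∈ ℝ: this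
one-parameter family consists of critical points of K (stationary solutions obtained
by the Routh–Lyapunov method). -/
theorem helical_family_critical_points (α lam0 lam1 lam3 : ℝ)
    (hα : α ≠ 0) (h0 : lam0 ≠ 0) (h1 : lam1 ≠ 0) (c : ℝ) :
    fderiv ℝ (Ksok α lam0 lam1 (-(α ^ 2 * lam0 ^ 2 + lam1 ^ 2) / (2 * lam0)) lam3)
      (-(lam1 * c) / (α * lam0), 0, c, -(c / α), 0, lam0 * c / lam1) = 0 := by
  have key : Ksok α lam0 lam1 (-(α ^ 2 * lam0 ^ 2 + lam1 ^ 2) / (2 * lam0)) lam3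
      = fun x : ℝ × ℝ × ℝ × ℝ × ℝ × ℝ =>
        (x.1 + lam1 * c / (α * lam0)) * (lam1 * lam3 * c * (x.2.2.1 - c) ^ 2 / (α * lam0) + 2 * lam1 * lam3 * c * (x.2.2.1 - c) * (x.2.2.2.1 + c / α) / (lam0) + (-1) * lam3 * (x.1 + lam1 * c / (α * lam0)) * (x.2.2.1 - c) ^ 2 / (2) + (-1) * lam1 * (x.2.2.2.1 + c / α) + lam0 * (x.1 + lam1 * c / (α * lam0)) / (2) + α * lam1 * lam3 * c * (x.2.2.2.1 + c / α) ^ 2 / (lam0) + (-1) * α * lam3 * x.2.1 * (x.2.2.1 - c) * x.2.2.2.2.1 + (-1) * α * lam3 * (x.1 + lam1 * c / (α * lam0)) * (x.2.2.1 - c) * (x.2.2.2.1 + c / α) + (-1) * α ^ 2 * lam3 * x.2.1 * (x.2.2.2.1 + c / α) * x.2.2.2.2.1 + (-1) * α ^ 2 * lam3 * (x.1 + lam1 * c / (α * lam0)) * (x.2.2.2.1 + c / α) ^ 2 / (2))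
        + x.2.1 * (lam1 * lam3 * c * (x.2.2.1 - c) * x.2.2.2.2.1 / (lam0) + (-1) * lam3 * x.2.1 * (x.2.2.1 - c) ^ 2 / (2) + (-1) * lam3 * c * x.2.1 * (x.2.2.1 - c) + (-1) * lam3 * c ^ 2 * x.2.1 / (2) + (-1) * lam1 * x.2.2.2.2.1 + lam0 * x.2.1 / (2) + α * lam1 * lam3 * c * (x.2.2.2.1 + c / α) * x.2.2.2.2.1 / (lam0) + (-1) * α ^ 2 * lam3 * x.2.1 * x.2.2.2.2.1 ^ 2 / (2))
        + (x.2.2.1 - c) * ((-1) * lam1 ^ 2 * lam3 * c ^ 2 * (x.2.2.1 - c) / (2 * α ^ 2 * lam0 ^ 2) + (-1) * lam1 ^ 2 * lam3 * c ^ 2 * (x.2.2.2.1 + c / α) / (α * lam0 ^ 2) + (-1) * lam3 * (x.2.2.1 - c) ^ 3 / (2) + (-1) * lam3 * c * (x.2.2.1 - c) ^ 2 + (-1) * lam3 * c ^ 2 * (x.2.2.1 - c) / (2) + (-1) * lam1 * (x.2.2.2.2.2 - lam0 * c / lam1) + lam0 * (x.2.2.1 - c) + (-1) * α * lam3 * (x.2.2.1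 - c) ^ 2 * (x.2.2.2.1 + c / α) + (-2) * α * lam3 * c * (x.2.2.1 - c) * (x.2.2.2.1 + c / α) + (-1) * α * lam3 * c ^ 2 * (x.2.2.2.1 + c / α) + α * lam0 * (x.2.2.2.1 + c / α) + (-1) * α ^ 2 * lam3 * (x.2.2.1 - c) * (x.2.2.2.1 + c / α) ^ 2 / (2) + (-1) * α ^ 2 * lam3 * c * (x.2.2.2.1 + c / α) ^ 2)
        + (x.2.2.2.1 + c / α) * ((-1) * lam1 ^ 2 * lam3 * c ^ 2 * (x.2.2.2.1 + c / α) / (2 * lam0 ^ 2) + lam1 ^ 2 * (x.2.2.2.1 + c / α) / (2 * lam0) + (-1) * α ^ 2 * lam3 * c ^ 2 * (x.2.2.2.1 + c / α) / (2) + α ^ 2 * lam0 * (x.2.2.2.1 + c / α) / (2))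
        + x.2.2.2.2.1 * (lam1 ^ 2 * x.2.2.2.2.1 / (2 * lam0) + α ^ 2 * lam0 * x.2.2.2.2.1 / (2))
        + (x.2.2.2.2.2 - lam0 * c / lam1) * (lam1 ^ 2 * (x.2.2.2.2.2 - lam0 * c / lam1) / (2 * lam0)) := by
    funext x
    obtain ⟨s1, s2, s3, r1, r2, r3⟩ := x
    show _ = _
    simp only [Ksok]
    field_simp
    ring
  rw [key]
  have e1 : HasFDerivAt (fun x : ℝ × ℝ × ℝ × ℝ × ℝ × ℝ =>
      (x.1 + lam1 * c / (α * lam0)) * (lam1 * lam3 * c * (x.2.2.1 - c) ^ 2 / (α * lam0) + 2 * lam1 * lam3 * c * (x.2.2.1 - c) * (x.2.2.2.1 + c / α) / (lam0) + (-1) * lam3 * (x.1 + lam1 * c / (α * lam0)) * (x.2.2.1 - c) ^ 2 / (2) + (-1) * lam1 * (x.2.2.2.1 + c / α) + lam0 * (x.1 + lam1 * c / (α * lam0)) / (2) + α * lam1 * lam3 * c * (x.2.2.2.1 + c / α) ^ 2 / (lam0) + (-1) * α * lam3 * x.2.1 * (x.2.2.1 - c) * x.2.2.2.2.1 + (-1)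 * α * lam3 * (x.1 + lam1 * c / (α * lam0)) * (x.2.2.1 - c) * (x.2.2.2.1 + c / α) + (-1) * α ^ 2 * lam3 * x.2.1 * (x.2.2.2.1 + c / α) * x.2.2.2.2.1 + (-1) * α ^ 2 * lam3 * (x.1 + lam1 * c / (α * lam0)) * (x.2.2.2.1 + c / α) ^ 2 / (2)))
      (0 : ℝ × ℝ × ℝ × ℝ × ℝ × ℝ →L[ℝ] ℝ)
      (-(lam1 * c) / (α * lam0), 0, c, -(c / α), 0, lam0 * c / lam1) := by
    apply mul_vanish_hasFDerivAt (by fun_prop) (by fun_prop) <;>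
      · try norm_num
        try ring
        try tauto
  have e2 : HasFDerivAt (fun x : ℝ × ℝ × ℝ × ℝ × ℝ × ℝ =>
      x.2.1 * (lam1 * lam3 * c * (x.2.2.1 - c) * x.2.2.2.2.1 / (lam0) + (-1) * lam3 * x.2.1 * (x.2.2.1 - c) ^ 2 / (2) + (-1) * lam3 * c * x.2.1 * (x.2.2.1 - c) + (-1) * lam3 * c ^ 2 * x.2.1 / (2) + (-1) * lam1 * x.2.2.2.2.1 + lam0 * x.2.1 / (2) + α * lam1 * lam3 * c * (x.2.2.2.1 + c / α) * x.2.2.2.2.1 / (lam0) + (-1) * α ^ 2 * lam3 * x.2.1 * x.2.2.2.2.1 ^ 2 / (2)))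
      (0 : ℝ × ℝ × ℝ × ℝ × ℝ × ℝ →L[ℝ] ℝ)
      (-(lam1 * c) / (α * lam0), 0, c, -(c / α), 0, lam0 * c / lam1) := by
    apply mul_vanish_hasFDerivAt (by fun_prop) (by fun_prop) <;>
      · try norm_num
        try ring
        try tauto
  have e3 : HasFDerivAt (fun x : ℝ × ℝ × ℝ × ℝ × ℝ × ℝ =>
      (x.2.2.1 - c) * ((-1) * lam1 ^ 2 * lam3 * c ^ 2 * (x.2.2.1 - c) / (2 * α ^ 2 * lam0 ^ 2) + (-1) * lam1 ^ 2 * lam3 * c ^ 2 * (x.2.2.2.1 + c / α) / (α * lam0 ^ 2) + (-1) * lam3 * (x.2.2.1 - c) ^ 3 / (2) + (-1) * lam3 * c * (x.2.2.1 - c) ^ 2 + (-1) * lam3 * c ^ 2 * (x.2.2.1 - c) / (2) + (-1) * lam1 * (x.2.2.2.2.2 - lam0 * c / lam1) + lam0 * (x.2.2.1 - c) + (-1) * α * lam3 * (x.2.2.1 - c) ^ 2 * (x.2.2.2.1 + c / α) + (-2) * α * lam3 * c * (x.2.2.1 - c) * (x.2.2.2.1 + c / α) + (-1) * α * lam3 *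 c ^ 2 * (x.2.2.2.1 + c / α) + α * lam0 * (x.2.2.2.1 + c / α) + (-1) * α ^ 2 * lam3 * (x.2.2.1 - c) * (x.2.2.2.1 + c / α) ^ 2 / (2) + (-1) * α ^ 2 * lam3 * c * (x.2.2.2.1 + c / α) ^ 2))
      (0 : ℝ × ℝ × ℝ × ℝ × ℝ × ℝ →L[ℝ] ℝ)
      (-(lam1 * c) / (α * lam0), 0, c, -(c / α), 0, lam0 * c / lam1) := by
    apply mul_vanish_hasFDerivAt (by fun_prop) (by fun_prop) <;>
      · try norm_num
        try ring
        try tauto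
  have e4 : HasFDerivAt (fun x : ℝ × ℝ × ℝ × ℝ × ℝ × ℝ =>
      (x.2.2.2.1 + c / α) * ((-1) * lam1 ^ 2 * lam3 * c ^ 2 * (x.2.2.2.1 + c / α) / (2 * lam0 ^ 2) + lam1 ^ 2 * (x.2.2.2.1 + c / α) / (2 * lam0) + (-1) * α ^ 2 * lam3 * c ^ 2 * (x.2.2.2.1 + c / α) / (2) + α ^ 2 * lam0 * (x.2.2.2.1 + c / α) / (2)))
      (0 : ℝ × ℝ × ℝ × ℝ × ℝ × ℝ →L[ℝ] ℝ)
      (-(lam1 * c) / (α * lam0), 0, c, -(c / α), 0, lam0 * c / lam1) := by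
    apply mul_vanish_hasFDerivAt (by fun_prop) (by fun_prop) <;>
      · try norm_num
        try ring
        try tauto
  have e5 : HasFDerivAt (fun x : ℝ × ℝ × ℝ × ℝ × ℝ × ℝ =>
      x.2.2.2.2.1 * (lam1 ^ 2 * x.2.2.2.2.1 / (2 * lam0) + α ^ 2 * lam0 * x.2.2.2.2.1 / (2)))
      (0 : ℝ × ℝ × ℝ × ℝ × ℝ × ℝ →L[ℝ] ℝ)
      (-(lam1 * c) / (α * lam0), 0, c, -(c / α), 0, lam0 * c / lam1) := by
    apply mul_vanish_hasFDerivAt (by fun_prop) (by fun_prop) <;>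
      · try norm_num
        try ring
        try tauto
  have e6 : HasFDerivAt (fun x : ℝ × ℝ × ℝ × ℝ × ℝ × ℝ =>
      (x.2.2.2.2.2 - lam0 * c / lam1) * (lam1 ^ 2 * (x.2.2.2.2.2 - lam0 * c / lam1) / (2 * lam0)))
      (0 : ℝ × ℝ × ℝ × ℝ × ℝ × ℝ →L[ℝ] ℝ)
      (-(lam1 * c) / (α * lam0), 0, c, -(c / α), 0, lam0 * c / lam1) := by
    apply mul_vanish_hasFDerivAt (by fun_prop) (by fun_prop) <;>
      · try norm_num
        try ring
        try tauto
  exact ((((((e1.add e2).add e3).add e4).add e5).add e6).fderiv).trans (by simp)
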